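/- arXiv:2408.16114 — 7 statements merged into one kernel-verified Lean document; each statement's English description precedes it below -/
import Mathlib

section
/- Let V be a finite-dimensional real inner product space, T : V → V a symmetric linear endomorphism, N : V → V a nilpotent linear endomorphism with T N = N T, and μ > 0. Let W be the span of all eigenvectors of T whose eigenvalues are ≤ −μ (note that N maps W into W, since N commutes with T). Then there exists a constant c > 0 such that for every Y ∈ W and every t ≥ 0 one has ‖exp(t T) exp(t N) Y‖ ≤ c e^{−(μ/2) t} ‖Y‖. -/
/-!
Because `T` and `N` commute, `exp (tT) exp (tN) Y = exp (tN) exp (tT) Y`. The span `W` is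
orthogonal to every eigenvector of the symmetric `T` whose eigenvalue exceeds `-μ`, so expanding in
an orthonormal eigenbasis shows that `exp (tT)` shrinks vectors of `W` by the factor `e^{-μt}`.
Since `N` is nilpotent, `exp (tN)` is a polynomial in `t`, and `(εt)^k / k! ≤ e^{εt}` bounds its
norm by `c e^{εt}` for every `ε > 0`; taking `ε = μ/2` gives the claim.
-/

open Filter Topology NormedSpace

open scoped RealInnerProductSpace

theorem exp_eq_sum_range_of_pow_eq_zero (𝕂 : Type*) {𝔸 : Type*} [Field 𝕂] [CharZero 𝕂] [Ring 𝔸]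
    [Algebra 𝕂 𝔸] [TopologicalSpace 𝔸] [IsTopologicalRing 𝔸] {x : 𝔸} {m : ℕ} (hx : x ^ m = 0) :
    exp x = ∑ k ∈ Finset.range m, (k.factorial⁻¹ : 𝕂) • x ^ k := by
  rw [exp_eq_tsum 𝕂]
  refine tsum_eq_sum fun k hk => ?_
  rw [pow_eq_zero_of_le (by simpa using hk) hx, smul_zero]

theorem exists_norm_exp_smul_le_of_pow_eq_zero {𝔸 : Type*} [NormedRing 𝔸] [NormedAlgebra ℝ 𝔸]
    {x : 𝔸} {m : ℕ} (hx : x ^ m = 0) {ε : ℝ} (hε : 0 < ε) :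
    ∃ c, 0 < c ∧ ∀ t : ℝ, 0 ≤ t → ‖exp (t • x)‖ ≤ c * Real.exp (ε * t) := by
  refine ⟨∑ k ∈ Finset.range m, ‖x ^ k‖ / ε ^ k + 1, by positivity, fun t ht => ?_⟩
  have hterm (k : ℕ) :
      ‖(k.factorial⁻¹ : ℝ) • (t • x) ^ k‖ ≤ ‖x ^ k‖ / ε ^ k * Real.exp (ε * t) := by
    have h := Real.pow_div_factorial_le_exp _ (mul_nonneg hε.le ht) k
    rw [mul_pow] at h
    rw [smul_pow, smul_smul, norm_smul, Real.norm_of_nonneg (by positivity)]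
    calc (k.factorial : ℝ)⁻¹ * t ^ k * ‖x ^ k‖
        = ε ^ k * t ^ k / k.factorial * (‖x ^ k‖ / ε ^ k) := by field_simp
      _ ≤ Real.exp (ε * t) * (‖x ^ k‖ / ε ^ k) := by gcongr
      _ = ‖x ^ k‖ / ε ^ k * Real.exp (ε * t) := mul_comm _ _
  have htx : (t • x) ^ m = 0 := by rw [smul_pow, hx, smul_zero]
  calc ‖exp (t • x)‖ ≤ ∑ k ∈ Finset.range m, ‖(k.factorial⁻¹ : ℝ) • (t • x) ^ k‖ := by
        rw [exp_eq_sum_range_of_pow_eq_zero ℝ htx]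
        exact norm_sum_le _ _
    _ ≤ ∑ k ∈ Finset.range m, ‖x ^ k‖ / ε ^ k * Real.exp (ε * t) :=
        Finset.sum_le_sum fun k _ => hterm k
    _ ≤ (∑ k ∈ Finset.range m, ‖x ^ k‖ / ε ^ k + 1) * Real.exp (ε * t) := by
        rw [← Finset.sum_mul]
        gcongr
        linarith

theorem exp_smul_apply_of_apply_eq_smul {V : Type*} [NormedAddCommGroup V] [NormedSpace ℝ V]
    [CompleteSpace V] (T : V →L[ℝ] V) {v : V} {a : ℝ} (hv : T v = a • v) (t : ℝ) :
    exp (t • T) v = Real.exp (t * a) • v := by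
  have htv : (t • T) v = (t * a) • v := by rw [smul_apply, hv, smul_smul]
  have hpow (n : ℕ) : ((t • T) ^ n) v = (t * a) ^ n • v := by
    induction n with
    | zero => simp
    | succ n ih => rw [pow_succ, mul_apply_eq_comp, htv, map_smul, ih, smul_smul, ← pow_succ']
  refine ((exp_series_hasSum_exp' (𝕂 := ℝ) (t • T)).mapL (.apply ℝ V v)).unique ?_
  rw [Real.exp_eq_exp_ℝ]
  simpa [hpow, smul_smul] using (exp_series_hasSum_exp' (𝕂 := ℝ) (t * a)).smul_const v

section InnerProductSpace

variable {V : Type*} [NormedAddCommGroup V] [InnerProductSpace ℝ V]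

theorem LinearMap.IsSymmetric.inner_eq_zero_of_mem_span_eigenvectors {T : V →ₗ[ℝ] V}
    (hT : T.IsSymmetric) {p : ℝ → Prop} {u : V} {b : ℝ} (hu : T u = b • u) (hb : ¬ p b) {x : V}
    (hx : x ∈ Submodule.span ℝ {v | ∃ a, p a ∧ T v = a • v}) : ⟪u, x⟫ = 0 := by
  suffices Submodule.span ℝ {v | ∃ a, p a ∧ T v = a • v} ≤ LinearMap.ker (innerₛₗ ℝ u) from
    this hx
  rw [Submodule.span_le]
  rintro v ⟨a, ha, hv⟩
  have hba : b - a ≠ 0 := sub_ne_zero.mpr fun h => hb (h ▸ ha)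
  have h := hT u v
  rw [hu, hv, real_inner_smul_left, real_inner_smul_right] at h
  exact (mul_eq_zero.mp (by linarith : (b - a) * ⟪u, v⟫ = 0)).resolve_left hba

theorem OrthonormalBasis.norm_le_mul_norm_of_abs_inner_le {ι : Type*} [Fintype ι]
    (b : OrthonormalBasis ι ℝ V) {x y : V} {c : ℝ} (hc : 0 ≤ c)
    (h : ∀ i, |⟪b i, y⟫| ≤ c * |⟪b i, x⟫|) : ‖y‖ ≤ c * ‖x‖ := by
  refine le_of_pow_le_pow_left₀ two_ne_zero (by positivity) ?_
  rw [mul_pow, ← b.sum_sq_norm_inner_right, ← b.sum_sq_norm_inner_right, Finset.mul_sum]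
  refine Finset.sum_le_sum fun i _ => ?_
  rw [Real.norm_eq_abs, Real.norm_eq_abs, ← mul_pow]
  exact pow_le_pow_left₀ (abs_nonneg _) (h i) 2

theorem norm_exp_smul_apply_le_of_mem_span_eigenvectors [FiniteDimensional ℝ V]
    (T : V →L[ℝ] V) (hT : (T : V →ₗ[ℝ] V).IsSymmetric) {μ t : ℝ} (ht : 0 ≤ t) {x : V}
    (hx : x ∈ Submodule.span ℝ {v | ∃ a, a ≤ -μ ∧ T v = a • v}) :
    ‖exp (t • T) x‖ ≤ Real.exp (-μ * t) * ‖x‖ := by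
  have hexp : ((exp (t • T) : V →L[ℝ] V) : V →ₗ[ℝ] V).IsSymmetric :=
    ContinuousLinearMap.isSelfAdjoint_iff_isSymmetric.mp
      ((IsSelfAdjoint.all t).smul (ContinuousLinearMap.isSelfAdjoint_iff_isSymmetric.mpr hT)).exp
  set b := hT.eigenvectorBasis rfl
  refine b.norm_le_mul_norm_of_abs_inner_le (Real.exp_pos _).le fun i => ?_
  have hb : T (b i) = hT.eigenvalues rfl i • b i := hT.apply_eigenvectorBasis rfl i
  have hsym : ⟪exp (t • T) (b i), x⟫ = ⟪b i, exp (t • T) x⟫ := hexp (b i) x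
  rw [← hsym, exp_smul_apply_of_apply_eq_smul T hb, real_inner_smul_left, abs_mul, Real.abs_exp]
  by_cases hi : hT.eigenvalues rfl i ≤ -μ
  · exact mul_le_mul_of_nonneg_right (Real.exp_le_exp.mpr (by nlinarith)) (abs_nonneg _)
  · rw [hT.inner_eq_zero_of_mem_span_eigenvectors hb hi hx, abs_zero, mul_zero, mul_zero]

end InnerProductSpace

/-- If `T` is symmetric, `N` is nilpotent and commutes with `T`, and `W` is the span of the
eigenvectors of `T` with eigenvalues `≤ -μ`, then `exp(tT) exp(tN)` decays on `W` at
exponential rate `μ/2`. -/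
theorem exp_hyperbolic_unipotent_decay
    {V : Type*} [NormedAddCommGroup V] [InnerProductSpace ℝ V] [FiniteDimensional ℝ V]
    (T N : V →L[ℝ] V)
    (hT : ∀ x y : V, (inner ℝ (T x) y : ℝ) = inner ℝ x (T y))
    (hNnil : ∃ m : ℕ, N ^ m = 0)
    (hcomm : T * N = N * T)
    (μ : ℝ) (hμ : 0 < μ) :
    ∃ c : ℝ, 0 < c ∧
      ∀ Y ∈ Submodule.span ℝ {v : V | ∃ a : ℝ, a ≤ -μ ∧ T v = a • v},
        ∀ t : ℝ, 0 ≤ t →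
          ‖exp (t • T) (exp (t • N) Y)‖ ≤ c * Real.exp (-(μ / 2) * t) * ‖Y‖ := by
  obtain ⟨m, hm⟩ := hNnil
  obtain ⟨c, hc, hN⟩ := exists_norm_exp_smul_le_of_pow_eq_zero hm (half_pos hμ)
  refine ⟨c, hc, fun Y hY t ht => ?_⟩
  have hexp_comm : Commute (exp (t • T)) (exp (t • N)) :=
    ((Commute.smul_left hcomm t).smul_right t).exp
  calc ‖exp (t • T) (exp (t • N) Y)‖ = ‖exp (t • N) (exp (t • T) Y)‖ := by
        rw [← mul_apply_eq_comp, hexp_comm.eq, mul_apply_eq_comp]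
    _ ≤ ‖exp (t • N)‖ * ‖exp (t • T) Y‖ := ContinuousLinearMap.le_opNorm _ _
    _ ≤ c * Real.exp (μ / 2 * t) * (Real.exp (-μ * t) * ‖Y‖) := by
        gcongr
        · exact hN t ht
        · exact norm_exp_smul_apply_le_of_mem_span_eigenvectors T hT ht hY
    _ = c * Real.exp (-(μ / 2) * t) * ‖Y‖ := by
        rw [mul_assoc c, ← mul_assoc (Real.exp _), ← Real.exp_add]
        ring_nf
end

section
/- Let N be a nilpotent real n×n matrix and let k be an orthogonal n×n matrix. Suppose that for every t ∈ ℝ there exist a diagonal matrix D(t) all of whose diagonal entries are 1 or −1, and an upper triangular matrix B(t) all of whose diagonal entries are positive, such that exp(t N)·k = k·D(t)·B(t). Then D(t) is the identity matrix for every t ∈ ℝ; that is, for every t ∈ ℝ there exists an upper triangular matrix B(t) with positive diagonal entries such that exp(t N)·k = k·B(t). -/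
open Filter Topology NormedSpace

/-!
Write `g = exp((t/2)·N)`, so that `exp(t·N) = g²`, and `g·k = k·D·B`. Then
`exp(t·N)·k = g·k·D·B = k·(D·B·D)·B`. Since `D` is diagonal with `D² = 1`, conjugating `B` by `D`
only changes the signs of its off-diagonal entries, so `D·B·D·B` is again upper triangular with
positive diagonal.
-/

namespace Matrix

variable {ι R : Type*} [Fintype ι] [LinearOrder ι]

def IsPosUpperTriangular [Zero R] [LT R] (B : Matrix ι ι R) : Prop :=
  B.IsUpperTriangular ∧ ∀ i, 0 < B i i

theorem IsUpperTriangular.mul_apply_self [NonUnitalNonAssocSemiring R] {A B : Matrix ι ι R}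
    (hA : A.IsUpperTriangular) (hB : B.IsUpperTriangular) (i : ι) :
    (A * B) i i = A i i * B i i := by
  rw [mul_apply]
  refine Finset.sum_eq_single i (fun j _ hji => ?_) (by simp)
  rcases hji.lt_or_gt with hji | hij
  · rw [hA hji, zero_mul]
  · rw [hB hij, mul_zero]

theorem IsPosUpperTriangular.mul [Semiring R] [PartialOrder R] [PosMulStrictMono R]
    {A B : Matrix ι ι R} (hA : A.IsPosUpperTriangular) (hB : B.IsPosUpperTriangular) :
    (A * B).IsPosUpperTriangular :=
  ⟨hA.1.mul hB.1, fun i => by rw [hA.1.mul_apply_self hB.1]; exact mul_pos (hA.2 i) (hB.2 i)⟩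

theorem IsPosUpperTriangular.diagonal_mul_mul_diagonal [CommSemiring R] [LT R]
    {B : Matrix ι ι R} {d : ι → R} (hd : ∀ i, d i * d i = 1) (hB : B.IsPosUpperTriangular) :
    (diagonal d * B * diagonal d).IsPosUpperTriangular := by
  refine ⟨((blockTriangular_diagonal d).mul hB.1).mul (blockTriangular_diagonal d), fun i => ?_⟩
  have hdiag : d i * B i i * d i = B i i := by rw [mul_right_comm, hd, one_mul]
  simpa only [mul_diagonal, diagonal_mul, hdiag] using hB.2 i

end Matrix

open Matrix in
theorem unipotent_fixed_point_sign_trivial_general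
    {n : ℕ} (N k : Matrix (Fin n) (Fin n) ℝ)
    (h : ∀ t : ℝ, ∃ D B : Matrix (Fin n) (Fin n) ℝ,
      (∀ i j, i ≠ j → D i j = 0) ∧ (∀ i, D i i = 1 ∨ D i i = -1) ∧
      (∀ i j : Fin n, j < i → B i j = 0) ∧ (∀ i, 0 < B i i) ∧
      exp (t • N) * k = k * D * B) :
    ∀ t : ℝ, ∃ B : Matrix (Fin n) (Fin n) ℝ,
      (∀ i j : Fin n, j < i → B i j = 0) ∧ (∀ i, 0 < B i i) ∧
      exp (t • N) * k = k * B := by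
  intro t
  obtain ⟨D, B, hD, hDsign, hBtri, hBpos, hEq⟩ := h (t / 2)
  have hB : B.IsPosUpperTriangular := ⟨fun i j hij => hBtri i j hij, hBpos⟩
  have hDdiag : diagonal D.diag = D := IsDiag.diagonal_diag fun i j => hD i j
  have hDsq : ∀ i, D.diag i * D.diag i = 1 := fun i => by
    rcases hDsign i with h1 | h1 <;> simp [diag, h1]
  have hDBDB := (hB.diagonal_mul_mul_diagonal hDsq).mul hB
  rw [hDdiag] at hDBDB
  refine ⟨D * B * D * B, fun i j hij => hDBDB.1 hij, hDBDB.2, ?_⟩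
  calc exp (t • N) * k = exp ((t / 2) • N) * (exp ((t / 2) • N) * k) := by
        rw [← mul_assoc, ← Matrix.exp_add_of_commute _ _ (Commute.refl _), ← add_smul, add_halves]
    _ = k * (D * B * D * B) := by
        rw [hEq, ← mul_assoc, ← mul_assoc, hEq]
        simp only [mul_assoc]

/-- If `exp(tN)·k = k·D(t)·B(t)` with `D(t)` diagonal with `±1` entries and `B(t)` upper
triangular with positive diagonal, then `D(t) = 1`; i.e. `exp(tN)·k = k·B(t)` with `B(t)`
upper triangular with positive diagonal. -/
theorem unipotent_fixed_point_sign_trivial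
    {n : ℕ} (N k : Matrix (Fin n) (Fin n) ℝ)
    (hN : ∃ m : ℕ, N ^ m = 0)
    (hk : k * k.transpose = 1)
    (h : ∀ t : ℝ, ∃ D B : Matrix (Fin n) (Fin n) ℝ,
      (∀ i j, i ≠ j → D i j = 0) ∧ (∀ i, D i i = 1 ∨ D i i = -1) ∧
      (∀ i j : Fin n, j < i → B i j = 0) ∧ (∀ i, 0 < B i i) ∧
      exp (t • N) * k = k * D * B) :
    ∀ t : ℝ, ∃ B : Matrix (Fin n) (Fin n) ℝ,
      (∀ i j : Fin n, j < i → B i j = 0) ∧ (∀ i, 0 < B i i) ∧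
      exp (t • N) * k = k * B :=
  unipotent_fixed_point_sign_trivial_general N k h
end

section
/- Let A : ℝ → Matrix(n,n,ℝ) be a matrix-valued function each of whose entries is a polynomial function of t, and assume A(t) is invertible for every t ∈ ℝ. For each t let Q(t) be the unique orthogonal matrix for which there exists an upper triangular matrix B(t) with positive diagonal entries satisfying A(t) = Q(t)·B(t). Then for every pair of indices (i, j) there exist real polynomials p and q such that q(t) ≠ 0 for all t ∈ ℝ, deg p ≤ deg q, and (Q(t)_{ij})² = p(t)/q(t) for all t ∈ ℝ. -/
open Filter Topology


open Matrix

noncomputable def QRD (n m : ℕ) (R : Type*) [CommRing R] : Matrix (Fin n) (Fin n) R :=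
  Matrix.diagonal (fun k : Fin n => if (k : ℕ) < m then 1 else 0)

variable {n : ℕ}

lemma QR_key (m : ℕ) (Qt B : Matrix (Fin n) (Fin n) ℝ)
    (hQ1 : Qt * Qtᵀ = 1)
    (hBtri : ∀ i j : Fin n, j < i → B i j = 0) (hBpos : ∀ i, 0 < B i i) :
    0 < (QRD n m ℝ * ((Qt*B)ᵀ * (Qt*B)) * QRD n m ℝ + (1 - QRD n m ℝ)).det ∧
    (Qt*B) * QRD n m ℝ *
      (QRD n m ℝ * ((Qt*B)ᵀ * (Qt*B)) * QRD n m ℝ + (1 - QRD n m ℝ))⁻¹ *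
      (QRD n m ℝ * (Qt*B)ᵀ) = Qt * QRD n m ℝ * Qtᵀ := by
  classical
  set d : Fin n → ℝ := fun k => if (k : ℕ) < m then 1 else 0 with hd
  set D : Matrix (Fin n) (Fin n) ℝ := QRD n m ℝ with hDdef
  have hDdiag : D = Matrix.diagonal d := rfl
  have hdd : d * d = d := by
    funext k; by_cases h : (k:ℕ) < m <;> simp [hd, h]
  have hDD : D * D = D := by
    rw [hDdiag, diagonal_mul_diagonal]
    exact congrArg Matrix.diagonal (funext fun k => by
      by_cases h : (k:ℕ) < m <;> simp [hd, h])
  have hDDX : ∀ X : Matrix (Fin n) (Fin n) ℝ, D * (D * X) = D * X := by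
    intro X; rw [← Matrix.mul_assoc, hDD]
  have hDT : Dᵀ = D := by rw [hDdiag, diagonal_transpose]
  have hQ2 : Qtᵀ * Qt = 1 := mul_eq_one_comm.mp hQ1
  have hBD : B * D = D * (B * D) := by
    ext k l
    rw [hDdiag]
    by_cases hk : (k:ℕ) < m
    · simp [Matrix.mul_diagonal, Matrix.diagonal_mul, hd, hk]
    · by_cases hl : (l:ℕ) < m
      · have hlk : l < k := by rw [Fin.lt_def]; omega
        simp [Matrix.mul_diagonal, Matrix.diagonal_mul, hd, hk, hl, hBtri k l hlk]
      · simp [Matrix.mul_diagonal, Matrix.diagonal_mul, hd, hk, hl]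
  have hBD' : D * B * D = B * D := by
    rw [Matrix.mul_assoc]; exact hBD.symm
  set Bt : Matrix (Fin n) (Fin n) ℝ := D * B * D + (1 - D) with hBtdef
  have h1D : (1 - D) * D = 0 := by
    rw [sub_mul, one_mul, hDD, sub_self]
  have hBtD : Bt * D = B * D := by
    rw [hBtdef, add_mul, h1D, add_zero, Matrix.mul_assoc (D*B) D D, hDD, hBD']
  have hDBt : D * Bt = B * D := by
    rw [hBtdef, mul_add, mul_sub, mul_one, hDD, sub_self, add_zero,
      ← Matrix.mul_assoc, ← Matrix.mul_assoc, hDD, hBD']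
  have hcomm : Bt * D = D * Bt := by rw [hBtD, hDBt]
  have hBtapp : ∀ k l : Fin n, Bt k l =
      d k * B k l * d l + ((1 : Matrix (Fin n) (Fin n) ℝ) k l - Matrix.diagonal d k l) := by
    intro k l
    simp [hBtdef, hDdiag, Matrix.add_apply, Matrix.sub_apply, Matrix.diagonal_mul,
      Matrix.mul_diagonal, mul_comm]
  have hBtTri : Bt.BlockTriangular id := by
    intro k l hlk
    have hne : k ≠ l := (ne_of_gt hlk)
    rw [hBtapp, hBtri k l hlk]
    simp [Matrix.one_apply_ne hne, Matrix.diagonal_apply_ne _ hne]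
  have hBtdiagpos : ∀ k, 0 < Bt k k := by
    intro k
    rw [hBtapp]
    by_cases h : (k:ℕ) < m <;>
      simp [hd, h, Matrix.one_apply, Matrix.diagonal_apply_eq, hBpos k]
  have hdetBt : 0 < Bt.det := by
    rw [Matrix.det_of_upperTriangular hBtTri]
    exact Finset.prod_pos fun k _ => hBtdiagpos k
  have hBtu : IsUnit Bt.det := (ne_of_gt hdetBt).isUnit
  have hAtA : (Qt*B)ᵀ * (Qt*B) = Bᵀ * B := by
    rw [transpose_mul]
    calc Bᵀ * Qtᵀ * (Qt * B) = Bᵀ * (Qtᵀ * Qt) * B := by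
          simp only [Matrix.mul_assoc]
      _ = Bᵀ * B := by rw [hQ2, Matrix.mul_one]
  have hBtT : Btᵀ = D * Bᵀ * D + (1 - D) := by
    rw [hBtdef, transpose_add, transpose_sub, transpose_one, transpose_mul, transpose_mul, hDT,
      Matrix.mul_assoc]
  have hDBT : D * Bᵀ = D * Btᵀ := by
    have h := congrArg Matrix.transpose hBtD
    rw [transpose_mul, transpose_mul, hDT] at h
    exact h.symm
  have hC : D * ((Qt*B)ᵀ * (Qt*B)) * D + (1 - D) = Btᵀ * Bt := by
    rw [hAtA, hBtT, hBtdef]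
    have e0 : D * (Bᵀ * B) * D = (D * Bᵀ * D) * (D * B * D) := by
      calc D * (Bᵀ * B) * D = (D * Bᵀ) * (B * D) := by
            simp only [Matrix.mul_assoc]
        _ = (D * Bᵀ) * (D * (B * D)) := by rw [← hBD]
        _ = (D * Bᵀ * D) * (D * B * D) := by
            simp only [Matrix.mul_assoc]; rw [hDDX]
    rw [e0]
    have c1 : (D * Bᵀ * D) * (1 - D) = 0 := by
      rw [mul_sub, mul_one, Matrix.mul_assoc (D * Bᵀ) D D, hDD, sub_self]
    have c2 : (1 - D) * (D * B * D) = 0 := by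
      rw [← Matrix.mul_assoc, ← Matrix.mul_assoc, h1D, Matrix.zero_mul, Matrix.zero_mul]
    have c3 : (1 - D) * (1 - D) = 1 - D := by
      rw [sub_mul, one_mul, mul_sub, mul_one, hDD]; abel
    rw [add_mul, mul_add, mul_add, c1, c2, c3, add_zero, zero_add]
  have hdetC : (D * ((Qt*B)ᵀ * (Qt*B)) * D + (1 - D)).det = Bt.det ^ 2 := by
    rw [hC, Matrix.det_mul, Matrix.det_transpose, sq]
  have hdetCpos : 0 < (D * ((Qt*B)ᵀ * (Qt*B)) * D + (1 - D)).det := by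
    rw [hdetC]; positivity
  refine ⟨hdetCpos, ?_⟩
  have hCinv : (D * ((Qt*B)ᵀ * (Qt*B)) * D + (1 - D))⁻¹ = Bt⁻¹ * Bt⁻¹ᵀ := by
    rw [hC, Matrix.mul_inv_rev, Matrix.transpose_nonsing_inv]
  have e1 : Bt * (D * Bt⁻¹) = D := by
    rw [← Matrix.mul_assoc, hcomm, Matrix.mul_assoc, Matrix.mul_nonsing_inv Bt hBtu,
      Matrix.mul_one]
  have e2 : Bt⁻¹ᵀ * (D * Btᵀ) = D := by
    have h := congrArg Matrix.transpose e1
    rw [transpose_mul, transpose_mul, hDT] at h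
    rw [← Matrix.mul_assoc]
    exact h
  have hf : ∀ X, B * (D * X) = Bt * (D * X) := by
    intro X
    rw [← Matrix.mul_assoc, ← Matrix.mul_assoc, hBtD]
  have hg : ∀ X, D * (Bᵀ * X) = D * (Btᵀ * X) := by
    intro X
    rw [← Matrix.mul_assoc, ← Matrix.mul_assoc, hDBT]
  have he1 : ∀ X, Bt * (D * (Bt⁻¹ * X)) = D * X := by
    intro X
    calc Bt * (D * (Bt⁻¹ * X)) = Bt * (D * Bt⁻¹) * X := by simp only [Matrix.mul_assoc]
      _ = D * X := by rw [e1]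
  have he2 : ∀ X, Bt⁻¹ᵀ * (D * (Btᵀ * X)) = D * X := by
    intro X
    calc Bt⁻¹ᵀ * (D * (Btᵀ * X)) = Bt⁻¹ᵀ * (D * Btᵀ) * X := by simp only [Matrix.mul_assoc]
      _ = D * X := by rw [e2]
  rw [hCinv, transpose_mul]
  simp only [Matrix.mul_assoc]
  rw [hg, hf, he2, he1, hDDX]

open Filter Topology Matrix Polynomial

noncomputable section QRaux

def QRC {n : ℕ} (Ap : Matrix (Fin n) (Fin n) (Polynomial ℝ)) (m : ℕ) :
    Matrix (Fin n) (Fin n) (Polynomial ℝ) :=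
  QRD n m (Polynomial ℝ) * (Apᵀ * Ap) * QRD n m (Polynomial ℝ) + (1 - QRD n m (Polynomial ℝ))

def QRg {n : ℕ} (Ap : Matrix (Fin n) (Fin n) (Polynomial ℝ)) (m : ℕ) : Polynomial ℝ :=
  (QRC Ap m).det

def QRr {n : ℕ} (Ap : Matrix (Fin n) (Fin n) (Polynomial ℝ)) (m : ℕ) (i : Fin n) :
    Polynomial ℝ :=
  (Ap * QRD n m (Polynomial ℝ) * (QRC Ap m).adjugate * (QRD n m (Polynomial ℝ) * Apᵀ)) i i

end QRaux

lemma QR_eval {n : ℕ} (Ap : Matrix (Fin n) (Fin n) (Polynomial ℝ)) (t : ℝ)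
    (At : Matrix (Fin n) (Fin n) ℝ) (hAt : ∀ a b, At a b = (Ap a b).eval t)
    (m : ℕ) (i : Fin n) :
    (QRg Ap m).eval t =
      (QRD n m ℝ * (Atᵀ * At) * QRD n m ℝ + (1 - QRD n m ℝ)).det ∧
    (QRr Ap m i).eval t =
      (At * QRD n m ℝ *
        (QRD n m ℝ * (Atᵀ * At) * QRD n m ℝ + (1 - QRD n m ℝ)).adjugate *
        (QRD n m ℝ * Atᵀ)) i i := by
  classical
  set φ : Matrix (Fin n) (Fin n) (Polynomial ℝ) →+* Matrix (Fin n) (Fin n) ℝ :=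
    (Polynomial.evalRingHom t).mapMatrix with hφ
  have hφA : φ Ap = At := by
    ext a b
    simp [hφ, RingHom.mapMatrix_apply, Matrix.map_apply, hAt a b]
  have hφAT : φ (Apᵀ) = Atᵀ := by
    ext a b
    simp [hφ, RingHom.mapMatrix_apply, Matrix.map_apply, Matrix.transpose_apply, hAt b a]
  have hφD : φ (QRD n m (Polynomial ℝ)) = QRD n m ℝ := by
    ext a b
    by_cases hab : a = b
    · subst hab
      by_cases h : (a:ℕ) < m <;>
        simp [hφ, QRD, RingHom.mapMatrix_apply, Matrix.map_apply, Matrix.diagonal_apply_eq, h]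
    · simp [hφ, QRD, RingHom.mapMatrix_apply, Matrix.map_apply, Matrix.diagonal_apply_ne _ hab]
  have hφC : φ (QRC Ap m) =
      QRD n m ℝ * (Atᵀ * At) * QRD n m ℝ + (1 - QRD n m ℝ) := by
    rw [QRC, _root_.map_add, _root_.map_sub, _root_.map_one, _root_.map_mul, _root_.map_mul, _root_.map_mul, hφA, hφAT, hφD]
  constructor
  · have := (Polynomial.evalRingHom t).map_det (QRC Ap m)
    rw [show (Polynomial.evalRingHom t).mapMatrix (QRC Ap m) = φ (QRC Ap m) from rfl, hφC] at this
    simpa [QRg] using this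
  · have hmap : φ (Ap * QRD n m (Polynomial ℝ) * (QRC Ap m).adjugate *
        (QRD n m (Polynomial ℝ) * Apᵀ)) =
        At * QRD n m ℝ *
          (QRD n m ℝ * (Atᵀ * At) * QRD n m ℝ + (1 - QRD n m ℝ)).adjugate *
          (QRD n m ℝ * Atᵀ) := by
      rw [_root_.map_mul, _root_.map_mul, _root_.map_mul, _root_.map_mul, hφA, hφAT, hφD]
      rw [show φ (QRC Ap m).adjugate = ((φ (QRC Ap m)).adjugate) from
        (Polynomial.evalRingHom t).map_adjugate (QRC Ap m), hφC]
    have : (φ (Ap * QRD n m (Polynomial ℝ) * (QRC Ap m).adjugate *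
        (QRD n m (Polynomial ℝ) * Apᵀ))) i i =
        (At * QRD n m ℝ *
          (QRD n m ℝ * (Atᵀ * At) * QRD n m ℝ + (1 - QRD n m ℝ)).adjugate *
          (QRD n m ℝ * Atᵀ)) i i := by rw [hmap]
    simpa [QRr, hφ, RingHom.mapMatrix_apply, Matrix.map_apply] using this
/-- If `A(t)` is a matrix of polynomial functions of `t`, invertible for all `t`, and
`Q(t)` is the orthogonal factor of its QR decomposition, then the squares of the entries
of `Q(t)` are rational functions of `t` whose denominator never vanishes and whose
numerator degree does not exceed the denominator degree. -/
theorem qr_factor_entries_squared_rational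
    {n : ℕ} (A : ℝ → Matrix (Fin n) (Fin n) ℝ)
    (hA_poly : ∀ i j : Fin n, ∃ p : Polynomial ℝ, ∀ t : ℝ, A t i j = p.eval t)
    (hA_inv : ∀ t : ℝ, IsUnit (A t))
    (Q : ℝ → Matrix (Fin n) (Fin n) ℝ)
    (hQ : ∀ t : ℝ, Q t * (Q t).transpose = 1 ∧
      ∃ B : Matrix (Fin n) (Fin n) ℝ,
        (∀ i j : Fin n, j < i → B i j = 0) ∧ (∀ i, 0 < B i i) ∧
        A t = Q t * B) :
    ∀ i j : Fin n, ∃ p q : Polynomial ℝ,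
      (∀ t : ℝ, q.eval t ≠ 0) ∧ p.degree ≤ q.degree ∧
      ∀ t : ℝ, (Q t i j) ^ 2 = p.eval t / q.eval t := by
  classical
  intro i j
  choose P hP using hA_poly
  set Ap : Matrix (Fin n) (Fin n) (Polynomial ℝ) := Matrix.of (fun a b => P a b) with hApdef
  have hAt : ∀ t : ℝ, ∀ a b, A t a b = (Ap a b).eval t := by
    intro t a b; exact hP a b t
  -- the key pointwise facts
  have hptwise : ∀ (t : ℝ) (m : ℕ),
      0 < (QRg Ap m).eval t ∧
      (QRr Ap m i).eval t = (QRg Ap m).eval t *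
        ∑ k : Fin n, (if (k:ℕ) < m then (Q t i k) ^ 2 else 0) := by
    intro t m
    obtain ⟨hQ1, B, hBtri, hBpos, hAB⟩ := hQ t
    obtain ⟨hgval, hrval⟩ := QR_eval Ap t (A t) (hAt t) m i
    obtain ⟨hdetpos, hmain⟩ := QR_key m (Q t) B hQ1 hBtri hBpos
    rw [← hAB] at hdetpos hmain
    set D : Matrix (Fin n) (Fin n) ℝ := QRD n m ℝ with hD
    set C : Matrix (Fin n) (Fin n) ℝ :=
      D * ((A t)ᵀ * (A t)) * D + (1 - D) with hC
    have hgC : (QRg Ap m).eval t = C.det := hgval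
    have hgpos : 0 < (QRg Ap m).eval t := by rw [hgC]; exact hdetpos
    refine ⟨hgpos, ?_⟩
    -- adjugate = det • inverse
    have hdetne : C.det ≠ 0 := ne_of_gt hdetpos
    have hadj : C.adjugate = C.det • C⁻¹ := by
      rw [Matrix.inv_def, Ring.inverse_eq_inv', smul_smul, mul_inv_cancel₀ hdetne, one_smul]
    have hQentry : (Q t * D * (Q t)ᵀ) i i =
        ∑ k : Fin n, (if (k:ℕ) < m then (Q t i k) ^ 2 else 0) := by
      rw [Matrix.mul_apply]
      refine Finset.sum_congr rfl fun k _ => ?_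
      rw [hD, QRD, Matrix.mul_diagonal, Matrix.transpose_apply]
      by_cases h : (k:ℕ) < m <;> simp [h] <;> ring
    rw [hrval, hadj]
    rw [show A t * D * (C.det • C⁻¹) * (D * (A t)ᵀ)
        = C.det • (A t * D * C⁻¹ * (D * (A t)ᵀ)) by
      rw [Matrix.mul_smul, Matrix.smul_mul]]
    rw [hmain, Matrix.smul_apply, smul_eq_mul, hQentry, hgC]
  -- the two polynomials
  set p : Polynomial ℝ := QRr Ap ((j:ℕ)+1) i * QRg Ap (j:ℕ)
      - QRr Ap (j:ℕ) i * QRg Ap ((j:ℕ)+1) with hpdef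
  set q : Polynomial ℝ := QRg Ap (j:ℕ) * QRg Ap ((j:ℕ)+1) with hqdef
  have hqpos : ∀ t : ℝ, 0 < q.eval t := by
    intro t
    rw [hqdef, Polynomial.eval_mul]
    exact mul_pos (hptwise t (j:ℕ)).1 (hptwise t ((j:ℕ)+1)).1
  have hrat : ∀ t : ℝ, (Q t i j) ^ 2 = p.eval t / q.eval t := by
    intro t
    obtain ⟨hg1, hr1⟩ := hptwise t (j:ℕ)
    obtain ⟨hg2, hr2⟩ := hptwise t ((j:ℕ)+1)
    have hsum : (∑ k : Fin n, (if (k:ℕ) < (j:ℕ)+1 then (Q t i k) ^ 2 else 0))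
        - (∑ k : Fin n, (if (k:ℕ) < (j:ℕ) then (Q t i k) ^ 2 else 0))
        = (Q t i j) ^ 2 := by
      rw [← Finset.sum_sub_distrib]
      rw [Finset.sum_eq_single j]
      · simp
      · intro k _ hkj
        have hkj' : (k:ℕ) ≠ (j:ℕ) := fun h => hkj (Fin.ext h)
        split_ifs with h1 h2 h3
        · ring
        · exfalso; omega
        · exfalso; omega
        · ring
      · intro h; exact absurd (Finset.mem_univ j) h
    have := hsum
    rw [show (∑ k : Fin n, (if (k:ℕ) < (j:ℕ)+1 then (Q t i k) ^ 2 else 0))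
          = (QRr Ap ((j:ℕ)+1) i).eval t / (QRg Ap ((j:ℕ)+1)).eval t by
        rw [hr2]; field_simp] at this
    rw [show (∑ k : Fin n, (if (k:ℕ) < (j:ℕ) then (Q t i k) ^ 2 else 0))
          = (QRr Ap (j:ℕ) i).eval t / (QRg Ap (j:ℕ)).eval t by
        rw [hr1]; field_simp] at this
    rw [← this, hpdef, hqdef]
    rw [Polynomial.eval_sub, Polynomial.eval_mul, Polynomial.eval_mul, Polynomial.eval_mul]
    field_simp
  refine ⟨p, q, fun t => ne_of_gt (hqpos t), ?_, hrat⟩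
  -- degree bound via boundedness
  have hbound : ∀ t : ℝ, |p.eval t / q.eval t| ≤ 1 := by
    intro t
    rw [← hrat t]
    rw [abs_of_nonneg (sq_nonneg _)]
    obtain ⟨hQ1, _, _, _, _⟩ := hQ t
    have hone : (∑ k : Fin n, Q t i k * Q t i k) = 1 := by
      have := congrFun (congrFun hQ1 i) i
      simpa [Matrix.mul_apply, Matrix.one_apply] using this
    calc (Q t i j) ^ 2 = Q t i j * Q t i j := sq (Q t i j) ▸ by ring
      _ ≤ ∑ k : Fin n, Q t i k * Q t i k := by
          apply Finset.single_le_sum (f := fun k => Q t i k * Q t i k)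
            (fun k _ => mul_self_nonneg _) (Finset.mem_univ j)
      _ = 1 := hone
  by_contra hdeg
  push_neg at hdeg
  have hq0 : q ≠ 0 := fun h => by simpa [h] using hqpos 0
  have htends := Polynomial.abs_div_tendsto_atTop_of_degree_gt p q hdeg hq0
  obtain ⟨t, ht⟩ := (htends.eventually (eventually_gt_atTop 1)).exists
  exact absurd (hbound t) (not_le.mpr ht)
end

section
/- Let h₁ ≥ h₂ ≥ … ≥ hₙ be real numbers. Every lower triangular real n×n matrix n with all diagonal entries equal to 1 can be written as a product n = n₁·n₂, where n₁ and n₂ are lower triangular with all diagonal entries equal to 1, n₁ satisfies (n₁)_{ij} = 0 for every pair i > j with h_i = h_j, and n₂ satisfies (n₂)_{ij} = 0 for every pair i > j with h_i ≠ h_j. -/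
open Matrix Finset

/-- Factorization `N⁻ = N⁻_H · N⁻(H)` for `SL(n,ℝ)`: every lower unitriangular matrix `L`
factors as `L = L₁·L₂` with `L₁`, `L₂` lower unitriangular, `L₁` vanishing at positions
`i > j` with `h i = h j`, and `L₂` vanishing at positions `i > j` with `h i ≠ h j`. -/
theorem lower_unitriangular_factorization
    {n : ℕ} (h : Fin n → ℝ) (hmono : Antitone h)
    (L : Matrix (Fin n) (Fin n) ℝ)
    (hlower : ∀ i j : Fin n, i < j → L i j = 0)
    (hdiag : ∀ i : Fin n, L i i = 1) :
    ∃ L₁ L₂ : Matrix (Fin n) (Fin n) ℝ,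
      (∀ i j : Fin n, i < j → L₁ i j = 0) ∧ (∀ i : Fin n, L₁ i i = 1) ∧
      (∀ i j : Fin n, i < j → L₂ i j = 0) ∧ (∀ i : Fin n, L₂ i i = 1) ∧
      (∀ i j : Fin n, j < i → h i = h j → L₁ i j = 0) ∧
      (∀ i j : Fin n, j < i → h i ≠ h j → L₂ i j = 0) ∧
      L = L₁ * L₂ := by
  classical
  set L₂ : Matrix (Fin n) (Fin n) ℝ :=
    Matrix.of (fun i j => if h i = h j then L i j else (1 : Matrix (Fin n) (Fin n) ℝ) i j) with hL₂
  have hL₂app : ∀ i j, L₂ i j = if h i = h j then L i j else (1 : Matrix (Fin n) (Fin n) ℝ) i j :=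
    fun i j => rfl
  have h₂low : ∀ i j : Fin n, i < j → L₂ i j = 0 := by
    intro i j hij
    rw [hL₂app]
    split
    · exact hlower i j hij
    · exact Matrix.one_apply_ne (ne_of_lt hij)
  have h₂diag : ∀ i : Fin n, L₂ i i = 1 := by
    intro i; rw [hL₂app]; simp [hdiag i]
  have h₂block : ∀ i j : Fin n, h i ≠ h j → L₂ i j = 0 := by
    intro i j hne
    rw [hL₂app, if_neg hne]
    exact Matrix.one_apply_ne (fun e => hne (by rw [e]))
  -- L₂ is block triangular for toDual ∘ (id), h, and toDual ∘ h
  have hbt1 : L₂.BlockTriangular (OrderDual.toDual : Fin n → (Fin n)ᵒᵈ) := by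
    intro i j hij
    exact h₂low i j (by exact_mod_cast hij)
  have hbt2 : L₂.BlockTriangular h := by
    intro i j hij
    exact h₂block i j (ne_of_gt hij)
  have hbt3 : L₂.BlockTriangular (fun i => OrderDual.toDual (h i)) := by
    intro i j hij
    exact h₂block i j (ne_of_lt (by exact_mod_cast hij))
  have hdet : L₂.det = 1 := by
    rw [Matrix.det_of_lowerTriangular L₂ hbt1]
    simp [h₂diag]
  haveI : Invertible L₂ := L₂.invertibleOfIsUnitDet (by simp [hdet])
  have hinvlow : ∀ i j : Fin n, i < j → L₂⁻¹ i j = 0 := by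
    intro i j hij
    exact Matrix.blockTriangular_inv_of_blockTriangular hbt1 (show OrderDual.toDual j < _ by exact_mod_cast hij)
  have hinvblock : ∀ i j : Fin n, h i ≠ h j → L₂⁻¹ i j = 0 := by
    intro i j hne
    rcases lt_or_gt_of_ne hne with hlt | hgt
    · exact Matrix.blockTriangular_inv_of_blockTriangular hbt3 (by exact_mod_cast hlt)
    · exact Matrix.blockTriangular_inv_of_blockTriangular hbt2 hgt
  have hmul : L₂ * L₂⁻¹ = 1 := Matrix.mul_nonsing_inv L₂ (by simp [hdet])
  have hinvdiag : ∀ i : Fin n, L₂⁻¹ i i = 1 := by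
    intro i
    have := congrFun (congrFun hmul i) i
    rw [Matrix.mul_apply] at this
    rw [Finset.sum_eq_single i] at this
    · rw [h₂diag i, one_mul] at this
      simpa using this
    · intro k _ hk
      rcases lt_or_gt_of_ne hk with hlt | hgt
      · rw [hinvlow k i hlt, mul_zero]
      · rw [h₂low i k hgt, zero_mul]
    · simp
  refine ⟨L * L₂⁻¹, L₂, ?_, ?_, h₂low, h₂diag, ?_, fun i j hij hne => h₂block i j hne, ?_⟩
  · -- L₁ lower triangular
    intro i j hij
    rw [Matrix.mul_apply]
    apply Finset.sum_eq_zero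
    intro k _
    rcases le_or_gt k i with hk | hk
    · rw [hinvlow k j (lt_of_le_of_lt hk hij), mul_zero]
    · rw [hlower i k hk, zero_mul]
  · -- L₁ diagonal
    intro i
    rw [Matrix.mul_apply, Finset.sum_eq_single i]
    · rw [hdiag i, hinvdiag i, one_mul]
    · intro k _ hk
      rcases lt_or_gt_of_ne hk with hlt | hgt
      · rw [hinvlow k i hlt, mul_zero]
      · rw [hlower i k hgt, zero_mul]
    · simp
  · -- L₁ vanishes on block positions
    intro i j hij hij'
    rw [Matrix.mul_apply]
    have key : ∀ k, L i k * L₂⁻¹ k j = L₂ i k * L₂⁻¹ k j := by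
      intro k
      by_cases hk : h i = h k
      · rw [hL₂app, if_pos hk]
      · have : h k ≠ h j := fun e => hk (by rw [e, hij'])
        rw [hinvblock k j this, mul_zero, mul_zero]
    rw [Finset.sum_congr rfl (fun k _ => key k), ← Matrix.mul_apply, hmul]
    exact Matrix.one_apply_ne (ne_of_gt hij)
  · -- factorization
    rw [Matrix.mul_assoc, Matrix.nonsing_inv_mul L₂ (by simp [hdet]), Matrix.mul_one]
end

section
/- Let H and H_r be real symmetric n×n matrices and let k be an orthogonal n×n matrix. Then the following are equivalent: (a) for every antisymmetric real n×n matrix Z, the derivative at s = 0 of the function s ↦ trace( (k·exp(s Z))·H_r·(k·exp(s Z))ᵀ·H ) is zero; (b) the matrix k·H_r·kᵀ commutes with H. -/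
/-!
Writing `P = k Hr kᵀ` and `W = k Z kᵀ`, the derivative at `0` equals
`trace ((W P - P W) H) = trace (W ⁅P, H⁆)`. Conjugation by `k` maps antisymmetric matrices onto
antisymmetric matrices, and `⁅P, H⁆` is itself antisymmetric since `P` and `H` are symmetric;
choosing `W = ⁅P, H⁆` gives `trace (⁅P, H⁆ᵀ ⁅P, H⁆) = 0`, hence `⁅P, H⁆ = 0`.
-/

open NormedSpace Matrix

section Calculus

attribute [local instance] Matrix.linftyOpNormedAddCommGroup Matrix.linftyOpNormedSpace
  Matrix.linftyOpNormedRing Matrix.linftyOpNormedAlgebra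

variable {𝕜 : Type*} [NontriviallyNormedField 𝕜] [CompleteSpace 𝕜]
  {m n : Type*} [Fintype m] [Fintype n]

theorem HasDerivAt.matrix_transpose {f : 𝕜 → Matrix m n 𝕜} {f' : Matrix m n 𝕜} {x : 𝕜}
    (hf : HasDerivAt f f' x) : HasDerivAt (fun s => (f s)ᵀ) f'ᵀ x :=
  (transposeLinearEquiv m n 𝕜 𝕜).toLinearMap.toContinuousLinearMap.hasFDerivAt.comp_hasDerivAt
    x hf

theorem HasDerivAt.matrix_trace {f : 𝕜 → Matrix n n 𝕜} {f' : Matrix n n 𝕜} {x : 𝕜}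
    (hf : HasDerivAt f f' x) : HasDerivAt (fun s => (f s).trace) f'.trace x :=
  (traceLinearMap n 𝕜 𝕜).toContinuousLinearMap.hasFDerivAt.comp_hasDerivAt x hf

theorem HasDerivAt.matrix_mul_mul_transpose [DecidableEq n] {f : 𝕜 → Matrix n n 𝕜}
    {f' : Matrix n n 𝕜} {x : 𝕜} (A : Matrix n n 𝕜) (hf : HasDerivAt f f' x) :
    HasDerivAt (fun s => f s * A * (f s)ᵀ) (f' * A * (f x)ᵀ + f x * A * f'ᵀ) x :=
  (hf.mul_const A).mul hf.matrix_transpose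

theorem hasDerivAt_trace_conj_exp_smul [DecidableEq n] (A H k Z : Matrix n n ℝ) :
    HasDerivAt (fun s : ℝ => ((k * exp (s • Z)) * A * (k * exp (s • Z))ᵀ * H).trace)
      ((k * Z * A * kᵀ + k * A * (k * Z)ᵀ) * H).trace 0 := by
  have hcurve : HasDerivAt (fun s : ℝ => k * exp (s • Z)) (k * Z) 0 := by
    have := (hasDerivAt_exp_smul_const (𝕂 := ℝ) Z 0).const_mul k
    rw [zero_smul, exp_zero, Matrix.one_mul] at this
    exact this
  simpa using ((hcurve.matrix_mul_mul_transpose A).mul_const H).matrix_trace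

end Calculus

section Algebra

variable {R : Type*} [CommRing R] {n : Type*} [Fintype n]

theorem trace_commutator_mul (W P H : Matrix n n R) :
    ((W * P - P * W) * H).trace = (W * (P * H - H * P)).trace := by
  rw [sub_mul, mul_sub, trace_sub, trace_sub, Matrix.mul_assoc, Matrix.mul_assoc,
    trace_mul_comm P, Matrix.mul_assoc]

theorem conj_mul_add_mul_transpose_conj [DecidableEq n] {k Z : Matrix n n R} (A : Matrix n n R)
    (hk : kᵀ * k = 1) (hZ : Zᵀ = -Z) :
    k * Z * A * kᵀ + k * A * (k * Z)ᵀ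
      = k * Z * kᵀ * (k * A * kᵀ) - k * A * kᵀ * (k * Z * kᵀ) := by
  simp only [transpose_mul, hZ, Matrix.mul_assoc, ← Matrix.mul_assoc kᵀ k, hk, Matrix.one_mul,
    Matrix.neg_mul, Matrix.mul_neg, sub_eq_add_neg]

theorem transpose_commutator_of_symm {P H : Matrix n n R} (hP : Pᵀ = P) (hH : Hᵀ = H) :
    (P * H - H * P)ᵀ = -(P * H - H * P) := by
  rw [transpose_sub, transpose_mul, transpose_mul, hP, hH, neg_sub]

end Algebra

/-- Criticality of the height function: for `H`, `H_r` symmetric and `k` orthogonal, the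
derivative at `s = 0` of `s ↦ trace((k·exp(sZ))·H_r·(k·exp(sZ))ᵀ·H)` vanishes for every
antisymmetric `Z` iff `k·H_r·kᵀ` commutes with `H`. -/
theorem height_function_critical_iff_commutes
    {n : ℕ} (H Hr k : Matrix (Fin n) (Fin n) ℝ)
    (hH : H.transpose = H) (hHr : Hr.transpose = Hr)
    (hk : k * k.transpose = 1) :
    (∀ Z : Matrix (Fin n) (Fin n) ℝ, Z.transpose = -Z →
      deriv (fun s : ℝ =>
        ((k * exp (s • Z)) * Hr * (k * exp (s • Z)).transpose * H).trace) 0 = 0)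
    ↔ (k * Hr * k.transpose) * H = H * (k * Hr * k.transpose) := by
  set P := k * Hr * kᵀ
  have hderiv : ∀ Z : Matrix (Fin n) (Fin n) ℝ, Zᵀ = -Z →
      deriv (fun s : ℝ => ((k * exp (s • Z)) * Hr * (k * exp (s • Z))ᵀ * H).trace) 0
        = (k * Z * kᵀ * (P * H - H * P)).trace := fun Z hZ => by
    rw [(hasDerivAt_trace_conj_exp_smul Hr H k Z).deriv,
      conj_mul_add_mul_transpose_conj Hr (mul_eq_one_comm.mp hk) hZ, trace_commutator_mul]
  refine ⟨fun hcrit => ?_, fun hcomm Z hZ => by rw [hderiv Z hZ, sub_eq_zero.mpr hcomm,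
    Matrix.mul_zero, trace_zero]⟩
  set W := P * H - H * P
  have hP : Pᵀ = P := by simp [P, transpose_mul, hHr, Matrix.mul_assoc]
  have hW : Wᵀ = -W := transpose_commutator_of_symm hP hH
  have hZ : (kᵀ * W * k)ᵀ = -(kᵀ * W * k) := by simp [transpose_mul, hW, Matrix.mul_assoc]
  have hconj : k * (kᵀ * W * k) * kᵀ = W := by
    rw [← Matrix.mul_assoc, ← Matrix.mul_assoc, hk, Matrix.one_mul, Matrix.mul_assoc, hk,
      Matrix.mul_one]
  have hWW : (W * W).trace = 0 := by
    simpa only [hcrit _ hZ, hconj, eq_comm] using hderiv _ hZ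
  have hW0 : W = 0 := by
    rw [← trace_conjTranspose_mul_self_eq_zero_iff, conjTranspose_eq_transpose_of_trivial, hW,
      Matrix.neg_mul, trace_neg, hWW, neg_zero]
  exact sub_eq_zero.mp hW0
end

section
/- Let H_r be a real diagonal n×n matrix with pairwise distinct diagonal entries, let H be a real diagonal n×n matrix, and let k be an orthogonal n×n matrix. Then k·H_r·kᵀ commutes with H if and only if k = l·m, where l is an orthogonal matrix commuting with H and m is a signed permutation matrix, i.e. a matrix having exactly one nonzero entry in each row and each column, with that entry equal to 1 or −1. -/
/-!
If `k D_d kᵀ` commutes with `D_h`, then `kᵀ D_h k` commutes with `D_d`; as `d` has distinct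
entries, `kᵀ D_h k = diagonal μ`, i.e. `D_h k = k diagonal μ`. Being conjugate, `D_h` and
`diagonal μ` have the same characteristic polynomial, so `μ ∘ σ = h` for a permutation `σ`, and
permuting the columns of `k` by `σ` yields `l` with `l D_h = D_h l` and `k = l P_σ`.
Conversely, a matrix `m` with at most one nonzero entry per column makes `m D_d mᵀ` diagonal,
and conjugating it by `l`, which commutes with `D_h`, keeps it in the commutant of `D_h`.
-/

open Matrix Polynomial

theorem Commute.conj_of_mul_eq_one {M : Type*} [Monoid M] {u v a b : M} (hvu : v * u = 1)
    (h : Commute (u * a * v) b) : Commute a (v * b * u) := by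
  calc a * (v * b * u) = v * u * a * (v * b * u) := by rw [hvu, one_mul]
    _ = v * ((u * a * v) * b) * u := by simp only [mul_assoc]
    _ = v * (b * (u * a * v)) * u := by rw [h.eq]
    _ = v * b * u * a * (v * u) := by simp only [mul_assoc]
    _ = v * b * u * a := by rw [hvu, mul_one]

theorem Fintype.exists_perm_comp_eq_of_map_univ_eq {ι α : Type*} [Fintype ι]
    {f g : ι → α} (h : Finset.univ.val.map f = Finset.univ.val.map g) :
    ∃ σ : Equiv.Perm ι, g ∘ σ = f := by
  classical
  have hfiber (c : α) : Fintype.card {i // f i = c} = Fintype.card {i // g i = c} := by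
    have := congrArg (Multiset.count c) h
    simp only [Multiset.count_map, eq_comm (a := c)] at this
    rw [Fintype.card_subtype, Fintype.card_subtype]
    exact this
  exact ⟨Equiv.ofFiberEquiv fun c => Fintype.equivOfCardEq (hfiber c),
    funext (Equiv.ofFiberEquiv_map _)⟩

theorem Commute.transpose {ι R : Type*} [Fintype ι] [CommSemiring R] {A B : Matrix ι ι R}
    (h : Commute A B) : Commute Aᵀ Bᵀ := by
  simpa only [Commute, SemiconjBy, ← Matrix.transpose_mul] using congrArg Matrix.transpose h.eq.symm

namespace Matrix

variable {ι R : Type*}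

def IsSignedPerm [Ring R] (m : Matrix ι ι R) : Prop :=
  (∀ i, ∃! j, m i j ≠ 0) ∧ (∀ j, ∃! i, m i j ≠ 0) ∧ (∀ i j, m i j ≠ 0 → m i j = 1 ∨ m i j = -1)

variable [DecidableEq ι]

theorem isSignedPerm_permMatrix [Ring R] [Nontrivial R] (σ : Equiv.Perm ι) :
    (σ.permMatrix R).IsSignedPerm := by
  refine ⟨fun i => ⟨σ i, ?_, fun j hj => ?_⟩, fun j => ⟨σ.symm j, ?_, fun i hi => ?_⟩,
    fun i j hij => ?_⟩ <;> simp_all [PEquiv.toMatrix_apply, Equiv.eq_symm_apply]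

variable [Fintype ι]

theorem roots_charpoly_diagonal [CommRing R] [IsDomain R] (d : ι → R) :
    (diagonal d).charpoly.roots = Finset.univ.val.map d := by
  rw [charpoly_diagonal,
    roots_prod _ _ (Finset.prod_ne_zero_iff.mpr fun i _ => X_sub_C_ne_zero (d i))]
  simp

theorem charpoly_conj_of_mul_eq_one [CommRing R] {u v : Matrix ι ι R} (hvu : v * u = 1)
    (A : Matrix ι ι R) : (u * A * v).charpoly = A.charpoly := by
  rw [mul_assoc, charpoly_mul_comm, mul_assoc, hvu, mul_one]

theorem isDiag_of_commute_diagonal [CommRing R] [NoZeroDivisors R] {d : ι → R}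
    (hd : Function.Injective d) {B : Matrix ι ι R} (h : Commute (diagonal d) B) : B.IsDiag := by
  intro i j hij
  have hij' := congr_fun (congr_fun h.eq i) j
  rw [diagonal_mul, mul_diagonal] at hij'
  have : (d i - d j) * B i j = 0 := by rw [sub_mul, hij', mul_comm, sub_self]
  exact (mul_eq_zero.mp this).resolve_left (sub_ne_zero.mpr (hd.ne hij))

theorem isDiag_mul_diagonal_mul_transpose [CommSemiring R] {m : Matrix ι ι R}
    (hm : ∀ j i i', m i j ≠ 0 → m i' j ≠ 0 → i = i') (d : ι → R) :
    (m * diagonal d * mᵀ).IsDiag := by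
  intro i i' hii'
  rw [mul_apply]
  refine Finset.sum_eq_zero fun j _ => ?_
  rw [mul_diagonal, transpose_apply]
  rcases eq_or_ne (m i j) 0 with hi | hi
  · rw [hi, zero_mul, zero_mul]
  rcases eq_or_ne (m i' j) 0 with hi' | hi'
  · rw [hi', mul_zero]
  · exact absurd (hm j i i' hi hi') hii'

theorem exists_perm_comp_eq_of_diagonal_eq_conj [CommRing R] [IsDomain R]
    {u v : Matrix ι ι R} (hvu : v * u = 1) {a b : ι → R} (h : diagonal a = u * diagonal b * v) :
    ∃ σ : Equiv.Perm ι, b ∘ σ = a :=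
  Fintype.exists_perm_comp_eq_of_map_univ_eq <| by
    rw [← roots_charpoly_diagonal, ← roots_charpoly_diagonal, h, charpoly_conj_of_mul_eq_one hvu]

theorem exists_commute_mul_permMatrix_of_diagonal_mul_eq [CommRing R] [IsDomain R]
    {k : Matrix ι ι R} (hk : k * kᵀ = 1) {a b : ι → R} (hab : diagonal a * k = k * diagonal b) :
    ∃ (l : Matrix ι ι R) (σ : Equiv.Perm ι),
      l * lᵀ = 1 ∧ Commute l (diagonal a) ∧ k = l * σ.permMatrix R := by
  have hconj : diagonal a = k * diagonal b * kᵀ := by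
    rw [← hab, mul_assoc, hk, mul_one]
  obtain ⟨σ, rfl⟩ := exists_perm_comp_eq_of_diagonal_eq_conj (mul_eq_one_comm.mp hk) hconj
  refine ⟨k.submatrix id σ, σ, ?_, ?_, ?_⟩
  · rw [transpose_submatrix, submatrix_mul_transpose_submatrix, hk]
  · ext i q
    have hiq := congr_fun (congr_fun hab i) (σ q)
    simp only [mul_diagonal, diagonal_mul, submatrix_apply, id, Function.comp_apply] at hiq ⊢
    exact hiq.symm
  · rw [PEquiv.mul_toMatrix_toPEquiv, submatrix_submatrix]
    simp

theorem commute_conj_diagonal_of_commute [CommSemiring R] {l m : Matrix ι ι R}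
    {d a : ι → R} (hl : Commute l (diagonal a))
    (hm : ∀ j i i', m i j ≠ 0 → m i' j ≠ 0 → i = i') :
    Commute (l * m * diagonal d * (l * m)ᵀ) (diagonal a) := by
  have hmdm : Commute (m * diagonal d * mᵀ) (diagonal a) :=
    (isDiag_mul_diagonal_mul_transpose hm d).diagonal_diag ▸ commute_diagonal _ a
  have hlt : Commute lᵀ (diagonal a) := by simpa using hl.transpose
  rw [transpose_mul, show l * m * diagonal d * (mᵀ * lᵀ) = l * (m * diagonal d * mᵀ) * lᵀ by
    simp only [mul_assoc]]
  exact (hl.mul_left hmdm).mul_left hlt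

end Matrix

/-- Classification of critical points: for `H_r` diagonal with pairwise distinct entries,
`H` diagonal, and `k` orthogonal, `k·H_r·kᵀ` commutes with `H` iff `k = l·m` with `l`
orthogonal commuting with `H` and `m` a signed permutation matrix. -/
theorem commutes_iff_centralizer_times_signed_permutation
    {n : ℕ} (d h : Fin n → ℝ) (hd : Function.Injective d)
    (k : Matrix (Fin n) (Fin n) ℝ) (hk : k * k.transpose = 1) :
    (k * Matrix.diagonal d * k.transpose) * Matrix.diagonal h
      = Matrix.diagonal h * (k * Matrix.diagonal d * k.transpose)
    ↔ ∃ l m : Matrix (Fin n) (Fin n) ℝ,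
        l * l.transpose = 1 ∧
        l * Matrix.diagonal h = Matrix.diagonal h * l ∧
        (∀ i : Fin n, ∃! j : Fin n, m i j ≠ 0) ∧
        (∀ j : Fin n, ∃! i : Fin n, m i j ≠ 0) ∧
        (∀ i j : Fin n, m i j ≠ 0 → m i j = 1 ∨ m i j = -1) ∧
        k = l * m := by
  constructor
  · intro hc
    have hkt : kᵀ * k = 1 := mul_eq_one_comm.mp hk
    have hdiag : (kᵀ * diagonal h * k).IsDiag :=
      isDiag_of_commute_diagonal hd (Commute.conj_of_mul_eq_one hkt hc)
    obtain ⟨l, σ, hl, hlh, rfl⟩ := exists_commute_mul_permMatrix_of_diagonal_mul_eq hk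
      (a := h) (b := (kᵀ * diagonal h * k).diag)
      (by simp only [hdiag.diagonal_diag, ← mul_assoc, hk, one_mul])
    obtain ⟨hrow, hcol, hval⟩ := isSignedPerm_permMatrix (R := ℝ) σ
    exact ⟨l, _, hl, hlh, hrow, hcol, hval, rfl⟩
  · rintro ⟨l, m, -, hlh, -, hcol, -, rfl⟩
    exact commute_conj_diagonal_of_commute hlh fun j i i' => (hcol j).unique
end

section
/- Let S¹ = {(x, y) ∈ ℝ² : x² + y² = 1} and define ψ : ℝ × S¹ → S¹ by ψ_t(x, y) = (x + t y, y) / ‖(x + t y, y)‖. Then the flow ψ is chain transitive on S¹: for all points p, q ∈ S¹ and all ε > 0 and T > 0, there exist an integer m ≥ 1, points p = p₀, p₁, …, p_m = q in S¹ and real times t₀, …, t_{m−1} with t_i ≥ T for all i, such that dist(ψ_{t_i}(p_i), p_{i+1}) < ε for all 0 ≤ i ≤ m − 1. -/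
open Filter Topology

/-- The unipotent flow `[[1, t], [0, 1]]` of `SL(2,ℝ)` acting on `SO(2) ≅ S¹` via the
Gram–Schmidt projection. -/
noncomputable def uniFlow (t : ℝ) (p : ℝ × ℝ) : ℝ × ℝ :=
  ((p.1 + t * p.2) / Real.sqrt ((p.1 + t * p.2) ^ 2 + p.2 ^ 2),
   p.2 / Real.sqrt ((p.1 + t * p.2) ^ 2 + p.2 ^ 2))

/-- The Euclidean distance on `ℝ²`. -/
noncomputable def euclDist (a b : ℝ × ℝ) : ℝ :=
  Real.sqrt ((a.1 - b.1) ^ 2 + (a.2 - b.2) ^ 2)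

/-!
The flow has exactly two fixed points on the circle, `(1, 0)` and `(-1, 0)`; every orbit in the
upper half-circle runs from `(-1, 0)` to `(1, 0)`, and every orbit in the lower half-circle runs
back. So an `(ε, T)`-chain can go from `p` to a fixed point by flowing forward, sit at fixed
points for time `T`, and reach any `q` by jumping from the fixed point that the backward orbit
of `q` converges to onto a point `ψ_{-s} q` with `s ≥ T`, then flowing for time `s`. The
backward convergence follows from the forward one, since the reflection `(x, y) ↦ (-x, y)`
conjugates `ψ_t` to `ψ_{-t}`.
-/

def ChainReachable {α : Type*} (φ : ℝ → α → α) (d : α → α → ℝ) (S : Set α) (ε T : ℝ)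
    (p q : α) : Prop :=
  ∃ (m : ℕ) (c : ℕ → α) (ts : ℕ → ℝ),
    1 ≤ m ∧ c 0 = p ∧ c m = q ∧ (∀ i ≤ m, c i ∈ S) ∧ (∀ i < m, T ≤ ts i) ∧
      (∀ i < m, d (φ (ts i) (c i)) (c (i + 1)) < ε)

namespace ChainReachable

variable {α : Type*} {φ : ℝ → α → α} {d : α → α → ℝ} {S : Set α} {ε T : ℝ} {p q r : α}

theorem single (hp : p ∈ S) (hq : q ∈ S) {t : ℝ} (ht : T ≤ t) (hd : d (φ t p) q < ε) :
    ChainReachable φ d S ε T p q := by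
  refine ⟨1, fun i => if i = 0 then p else q, fun _ => t, le_rfl, rfl, rfl, ?_,
    fun _ _ => ht, ?_⟩
  · intro i _
    dsimp only
    split_ifs
    exacts [hp, hq]
  · intro i hi
    obtain rfl : i = 0 := by omega
    simpa using hd

theorem trans (h₁ : ChainReachable φ d S ε T p q) (h₂ : ChainReachable φ d S ε T q r) :
    ChainReachable φ d S ε T p r := by
  obtain ⟨m₁, c₁, ts₁, hm₁, hc₁0, hc₁m, hc₁S, hts₁, hd₁⟩ := h₁
  obtain ⟨m₂, c₂, ts₂, hm₂, hc₂0, hc₂m, hc₂S, hts₂, hd₂⟩ := h₂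
  set c : ℕ → α := fun i => if i ≤ m₁ then c₁ i else c₂ (i - m₁)
  have hc_left : ∀ i ≤ m₁, c i = c₁ i := fun i hi => if_pos hi
  have hc_right : ∀ i, m₁ ≤ i → c i = c₂ (i - m₁) := by
    intro i hi
    rcases hi.eq_or_lt with rfl | hi
    · simp [c, hc₁m, hc₂0]
    · exact if_neg (not_le.2 hi)
  refine ⟨m₁ + m₂, c, fun i => if i < m₁ then ts₁ i else ts₂ (i - m₁), by omega, ?_, ?_, ?_,
    ?_, ?_⟩
  · rw [hc_left 0 (Nat.zero_le _), hc₁0]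
  · rw [hc_right _ (by omega), Nat.add_sub_cancel_left, hc₂m]
  · intro i hi
    rcases le_total i m₁ with h | h
    · rw [hc_left i h]; exact hc₁S i h
    · rw [hc_right i h]; exact hc₂S _ (by omega)
  · intro i hi
    dsimp only
    split_ifs with h
    · exact hts₁ i h
    · exact hts₂ _ (by omega)
  · intro i hi
    dsimp only
    split_ifs with h
    · rw [hc_left i h.le, hc_left (i + 1) h]
      exact hd₁ i h
    · rw [hc_right i (not_lt.1 h), hc_right (i + 1) (by omega),
        show i + 1 - m₁ = i - m₁ + 1 by omega]
      exact hd₂ _ (by omega)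

end ChainReachable

def unitCircle : Set (ℝ × ℝ) := {z | z.1 ^ 2 + z.2 ^ 2 = 1}

def negFst (z : ℝ × ℝ) : ℝ × ℝ := (-z.1, z.2)

theorem ne_zero_of_mem_unitCircle {z : ℝ × ℝ} (hz : z ∈ unitCircle) : z ≠ 0 := by
  rintro rfl
  simp [unitCircle] at hz

theorem mk_mem_unitCircle {σ : ℝ} (hσ : σ ^ 2 = 1) : (σ, (0 : ℝ)) ∈ unitCircle := by
  simp [unitCircle, hσ]

theorem euclDist_self (a : ℝ × ℝ) : euclDist a a = 0 := by
  simp [euclDist]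

theorem euclDist_comm (a b : ℝ × ℝ) : euclDist a b = euclDist b a := by
  simp only [euclDist]
  ring_nf

theorem euclDist_negFst (a b : ℝ × ℝ) : euclDist (negFst a) (negFst b) = euclDist a b := by
  simp only [euclDist, negFst]
  ring_nf

theorem uniFlow_fixed {σ : ℝ} (hσ : σ ^ 2 = 1) (t : ℝ) : uniFlow t (σ, 0) = (σ, 0) := by
  simp [uniFlow, hσ]

theorem uniFlow_zero {z : ℝ × ℝ} (hz : z ∈ unitCircle) : uniFlow 0 z = z := by
  simp [uniFlow, hz.out]

theorem uniFlow_radicand_pos (t : ℝ) {z : ℝ × ℝ} (hz : z ≠ 0) :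
    0 < (z.1 + t * z.2) ^ 2 + z.2 ^ 2 := by
  by_contra! h
  apply hz
  have h2 : z.2 = 0 := by nlinarith [sq_nonneg (z.1 + t * z.2), sq_nonneg z.2]
  have h1 : z.1 = 0 := by simp only [h2, mul_zero, add_zero] at h; nlinarith [sq_nonneg z.1]
  exact Prod.ext h1 h2

theorem uniFlow_mem_unitCircle (t : ℝ) {z : ℝ × ℝ} (hz : z ≠ 0) : uniFlow t z ∈ unitCircle := by
  have hpos := uniFlow_radicand_pos t hz
  simp only [unitCircle, Set.mem_ofPred_eq, uniFlow, div_pow, ← add_div,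
    Real.sq_sqrt hpos.le]
  exact div_self hpos.ne'

theorem uniFlow_smul {c : ℝ} (hc : 0 < c) (t : ℝ) (w : ℝ × ℝ) :
    uniFlow t (c • w) = uniFlow t w := by
  have hlin : c * w.1 + t * (c * w.2) = c * (w.1 + t * w.2) := by ring
  have hroot : Real.sqrt ((c * (w.1 + t * w.2)) ^ 2 + (c * w.2) ^ 2)
      = c * Real.sqrt ((w.1 + t * w.2) ^ 2 + w.2 ^ 2) := by
    rw [show (c * (w.1 + t * w.2)) ^ 2 + (c * w.2) ^ 2 = c ^ 2 * ((w.1 + t * w.2) ^ 2 + w.2 ^ 2)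
      by ring, Real.sqrt_mul (sq_nonneg c), Real.sqrt_sq hc.le]
  simp only [uniFlow, Prod.smul_fst, Prod.smul_snd, smul_eq_mul, hlin, hroot,
    mul_div_mul_left _ _ hc.ne']

theorem uniFlow_uniFlow (s t : ℝ) (z : ℝ × ℝ) : uniFlow s (uniFlow t z) = uniFlow (s + t) z := by
  rcases eq_or_ne z 0 with rfl | hz
  · simp [uniFlow]
  set r := Real.sqrt ((z.1 + t * z.2) ^ 2 + z.2 ^ 2) with hr
  have hflow : uniFlow t z = r⁻¹ • (z.1 + t * z.2, z.2) := by
    ext <;> simp [uniFlow, ← hr, div_eq_inv_mul]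
  rw [hflow, uniFlow_smul (inv_pos.2 (Real.sqrt_pos.2 (uniFlow_radicand_pos t hz)))]
  simp only [uniFlow]
  ring_nf

theorem uniFlow_neg (t : ℝ) (z : ℝ × ℝ) : uniFlow (-t) z = negFst (uniFlow t (negFst z)) := by
  have h : (-z.1 + t * z.2) ^ 2 = (z.1 + -t * z.2) ^ 2 := by ring
  simp only [uniFlow, negFst, h]
  ext <;> ring_nf

theorem euclDist_normalize_le {s y σ : ℝ} (hσ : σ ^ 2 = 1) (hs : 0 < σ * s) :
    euclDist (s / Real.sqrt (s ^ 2 + y ^ 2), y / Real.sqrt (s ^ 2 + y ^ 2)) (σ, 0)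
      ≤ |y| / (σ * s) := by
  set r := Real.sqrt (s ^ 2 + y ^ 2)
  set u := σ * s with hu
  have hr2 : r ^ 2 = s ^ 2 + y ^ 2 := Real.sq_sqrt (by positivity)
  have hy2 : y ^ 2 = r ^ 2 - u ^ 2 := by rw [hr2, hu, mul_pow, hσ, one_mul]; ring
  have hur : u ≤ r := by nlinarith [Real.sqrt_nonneg (s ^ 2 + y ^ 2)]
  have hr0 : 0 < r := hs.trans_le hur
  have hsq : (s / r - σ) ^ 2 + (y / r - 0) ^ 2 = 2 * (r - u) / r := by
    rw [show (s / r - σ) ^ 2 + (y / r - 0) ^ 2 = (s ^ 2 + y ^ 2) / r ^ 2 - 2 * u / r + σ ^ 2 by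
      ring, ← hr2, div_self (by positivity), hσ]
    field_simp
    ring
  have hle : 2 * (r - u) / r ≤ (|y| / u) ^ 2 := by
    rw [div_pow, sq_abs, hy2, div_le_div_iff₀ hr0 (by positivity)]
    nlinarith [mul_nonneg (mul_nonneg (sub_nonneg.2 hur) (sub_nonneg.2 hur))
      (by linarith : 0 ≤ r + 2 * u)]
  calc euclDist (s / r, y / r) (σ, 0) = Real.sqrt (2 * (r - u) / r) := by
        rw [euclDist, ← hsq]
    _ ≤ Real.sqrt ((|y| / u) ^ 2) := Real.sqrt_le_sqrt hle
    _ = |y| / u := Real.sqrt_sq (by positivity)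

theorem tendsto_euclDist_uniFlow_atTop {z : ℝ × ℝ} {σ : ℝ} (hσ : σ ^ 2 = 1)
    (hz : 0 < σ * z.2) : Tendsto (fun t => euclDist (uniFlow t z) (σ, 0)) atTop (𝓝 0) := by
  have hlin : Tendsto (fun t => σ * (z.1 + t * z.2)) atTop atTop := by
    have : Tendsto (fun t => σ * z.1 + t * (σ * z.2)) atTop atTop :=
      tendsto_atTop_add_const_left _ _ (tendsto_id.atTop_mul_const hz)
    refine this.congr fun t => by ring
  refine squeeze_zero' (Eventually.of_forall fun t => Real.sqrt_nonneg _)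
    ((hlin.eventually_gt_atTop 0).mono fun t ht => euclDist_normalize_le hσ ht)
    (tendsto_const_nhds.div_atTop hlin)

theorem tendsto_euclDist_uniFlow_neg_atTop {z : ℝ × ℝ} {σ : ℝ} (hσ : σ ^ 2 = 1)
    (hz : σ * z.2 < 0) : Tendsto (fun t => euclDist (uniFlow (-t) z) (σ, 0)) atTop (𝓝 0) := by
  have hreflect : ((σ, 0) : ℝ × ℝ) = negFst (-σ, 0) := by simp [negFst]
  simp only [uniFlow_neg, hreflect, euclDist_negFst]
  exact tendsto_euclDist_uniFlow_atTop (by rwa [neg_sq]) (by simpa [negFst] using hz)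

section CircleChains

variable {ε T : ℝ}

theorem chainReachable_fixed_self {σ : ℝ} (hσ : σ ^ 2 = 1) (hε : 0 < ε) :
    ChainReachable uniFlow euclDist unitCircle ε T (σ, 0) (σ, 0) :=
  .single (mk_mem_unitCircle hσ) (mk_mem_unitCircle hσ) le_rfl
    (by rwa [uniFlow_fixed hσ, euclDist_self])

theorem chainReachable_fixed_of_mul_pos {z : ℝ × ℝ} {σ : ℝ} (hz : z ∈ unitCircle)
    (hσ : σ ^ 2 = 1) (hzσ : 0 < σ * z.2) (hε : 0 < ε) :
    ChainReachable uniFlow euclDist unitCircle ε T z (σ, 0) := by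
  obtain ⟨t, hlt, ht⟩ := (((tendsto_order.1 (tendsto_euclDist_uniFlow_atTop hσ hzσ)).2 ε hε).and
    (eventually_ge_atTop T)).exists
  exact .single hz (mk_mem_unitCircle hσ) ht hlt

theorem chainReachable_of_fixed_of_mul_neg {q : ℝ × ℝ} {σ : ℝ} (hq : q ∈ unitCircle)
    (hσ : σ ^ 2 = 1) (hqσ : σ * q.2 < 0) (hε : 0 < ε) :
    ChainReachable uniFlow euclDist unitCircle ε T (σ, 0) q := by
  obtain ⟨s, hlt, hs⟩ :=
    (((tendsto_order.1 (tendsto_euclDist_uniFlow_neg_atTop hσ hqσ)).2 ε hε).and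
      (eventually_ge_atTop T)).exists
  have ha : uniFlow (-s) q ∈ unitCircle := uniFlow_mem_unitCircle _ (ne_zero_of_mem_unitCircle hq)
  refine (ChainReachable.single (mk_mem_unitCircle hσ) ha le_rfl ?_).trans
    (ChainReachable.single ha hq hs ?_)
  · rwa [uniFlow_fixed hσ, euclDist_comm]
  · rwa [uniFlow_uniFlow, add_neg_cancel, uniFlow_zero hq, euclDist_self]

theorem chainReachable_fixed_fixed {σ τ : ℝ} (hσ : σ ^ 2 = 1) (hτ : τ ^ 2 = 1) (hε : 0 < ε) :
    ChainReachable uniFlow euclDist unitCircle ε T (σ, 0) (τ, 0) := by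
  rcases sq_eq_sq_iff_eq_or_eq_neg.1 (hσ.trans hτ.symm) with rfl | rfl
  · exact chainReachable_fixed_self hσ hε
  · have hmem : ((0 : ℝ), τ) ∈ unitCircle := by simpa [unitCircle] using hτ
    exact (chainReachable_of_fixed_of_mul_neg hmem hσ (by nlinarith) hε).trans
      (chainReachable_fixed_of_mul_pos hmem hτ (by simp [← sq, hτ]) hε)

theorem exists_chainReachable_fixed {p : ℝ × ℝ} (hp : p ∈ unitCircle) (hε : 0 < ε) :
    ∃ σ : ℝ, σ ^ 2 = 1 ∧ ChainReachable uniFlow euclDist unitCircle ε T p (σ, 0) := by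
  obtain ⟨x, y⟩ := p
  rcases lt_trichotomy y 0 with hy | rfl | hy
  · exact ⟨-1, by norm_num, chainReachable_fixed_of_mul_pos hp (by norm_num) (by simpa) hε⟩
  · have hx : x ^ 2 = 1 := by simpa [unitCircle] using hp
    exact ⟨x, hx, chainReachable_fixed_self hx hε⟩
  · exact ⟨1, by norm_num, chainReachable_fixed_of_mul_pos hp (by norm_num) (by simpa) hε⟩

theorem exists_fixed_chainReachable {q : ℝ × ℝ} (hq : q ∈ unitCircle) (hε : 0 < ε) :
    ∃ σ : ℝ, σ ^ 2 = 1 ∧ ChainReachable uniFlow euclDist unitCircle ε T (σ, 0) q := by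
  obtain ⟨x, y⟩ := q
  rcases lt_trichotomy y 0 with hy | rfl | hy
  · exact ⟨1, by norm_num, chainReachable_of_fixed_of_mul_neg hq (by norm_num) (by simpa) hε⟩
  · have hx : x ^ 2 = 1 := by simpa [unitCircle] using hq
    exact ⟨x, hx, chainReachable_fixed_self hx hε⟩
  · exact ⟨-1, by norm_num, chainReachable_of_fixed_of_mul_neg hq (by norm_num) (by simpa) hε⟩

end CircleChains

theorem uniFlow_chain_transitive_general
    (p q : ℝ × ℝ) (hp : p.1 ^ 2 + p.2 ^ 2 = 1) (hq : q.1 ^ 2 + q.2 ^ 2 = 1)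
    (ε T : ℝ) (hε : 0 < ε) :
    ∃ (m : ℕ) (c : ℕ → ℝ × ℝ) (ts : ℕ → ℝ),
      1 ≤ m ∧ c 0 = p ∧ c m = q ∧
      (∀ i ≤ m, (c i).1 ^ 2 + (c i).2 ^ 2 = 1) ∧
      (∀ i < m, T ≤ ts i) ∧
      (∀ i < m, euclDist (uniFlow (ts i) (c i)) (c (i + 1)) < ε) := by
  obtain ⟨σ, hσ, hpσ⟩ := exists_chainReachable_fixed hp hε
  obtain ⟨τ, hτ, hτq⟩ := exists_fixed_chainReachable hq hε
  exact (hpσ.trans (chainReachable_fixed_fixed hσ hτ hε)).trans hτq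

/-- The unipotent flow is chain transitive on the circle: between any two points of `S¹`
there is an `(ε, T)`-chain for all `ε, T > 0`. -/
theorem uniFlow_chain_transitive
    (p q : ℝ × ℝ) (hp : p.1 ^ 2 + p.2 ^ 2 = 1) (hq : q.1 ^ 2 + q.2 ^ 2 = 1)
    (ε T : ℝ) (hε : 0 < ε) (hT : 0 < T) :
    ∃ (m : ℕ) (c : ℕ → ℝ × ℝ) (ts : ℕ → ℝ),
      1 ≤ m ∧ c 0 = p ∧ c m = q ∧
      (∀ i ≤ m, (c i).1 ^ 2 + (c i).2 ^ 2 = 1) ∧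
      (∀ i < m, T ≤ ts i) ∧
      (∀ i < m, euclDist (uniFlow (ts i) (c i)) (c (i + 1)) < ε) :=
  uniFlow_chain_transitive_general p q hp hq ε T hε
end
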